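/- arXiv:2503.19729 — 4 statements merged into one kernel-verified Lean document; each statement's English description precedes it below -/
import Mathlib

section
/- Let X be a compact topological space, V a finite-dimensional real vector space of continuous functions f : X → ℝ with basis f_1, ..., f_d, and let γ : X → ℝ^d be given by γ(x) = (f_1(x), ..., f_d(x)). For any closed set A ⊆ X, the origin 0 lies in the convex hull of γ(A) if and only if every f ∈ V changes sign on A (i.e., there exist x, y ∈ A with f(x) ≥ 0 and f(y) ≤ 0). -/
/-!
Every `g` in the span of the `fᵢ` is `φ ∘ γ` for a linear functional `φ` on `ℝᵈ`, and conversely,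
so `g` changes sign on `A` exactly when `φ` changes sign on `γ(A)`. If `0` lies in the convex hull,
no `φ` can be strictly positive or strictly negative on `γ(A)`. Conversely, `γ(A)` is compact,
hence so is its convex hull by Carathéodory's theorem; if the hull missed `0`, a strictly
separating functional `φ` would give a `g` that is positive on all of `A`.
-/

open Set Module

section ConvexHull

variable {E : Type*} [AddCommGroup E] [Module ℝ E]

theorem convexHull_range_eq_image_stdSimplex {ι : Type*} [Fintype ι] (z : ι → E) :
    convexHull ℝ (range z) = (fun w : ι → ℝ => ∑ i, w i • z i) '' stdSimplex ℝ ι := by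
  classical
  have hlin : (fun w : ι → ℝ => ∑ i, w i • z i) = Fintype.linearCombination ℝ z := rfl
  rw [← convexHull_basis_eq_stdSimplex, hlin, LinearMap.image_convexHull, ← range_comp]
  congr 2
  ext i
  simp [Fintype.linearCombination_apply, ite_smul]

-- Carathéodory's theorem bounds the number of points needed by `finrank ℝ E + 1`.
theorem convexHull_eq_image_stdSimplex_prod [FiniteDimensional ℝ E] (s : Set E) :
    convexHull ℝ s = (fun p : (Fin (finrank ℝ E + 1) → ℝ) × (Fin (finrank ℝ E + 1) → E) =>
      ∑ i, p.1 i • p.2 i) '' (stdSimplex ℝ _ ×ˢ univ.pi fun _ => s) := by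
  apply Subset.antisymm
  · intro x hx
    obtain ⟨ι, _, z, w, hzs, hz, hw₀, hw₁, rfl⟩ := eq_pos_convex_span_of_mem_convexHull hx
    have : Nonempty ι := by
      by_contra!
      simp at hw₁
    obtain ⟨e⟩ : Nonempty (ι ↪ Fin (finrank ℝ E + 1)) :=
      Function.Embedding.nonempty_of_card_le
        (by simpa using hz.card_le_finrank_succ.trans (Nat.succ_le_succ (Submodule.finrank_le _)))
    have hσ := Function.invFun_surjective e.injective
    have hmem : ∑ i, w i • z i ∈ convexHull ℝ (range (z ∘ Function.invFun e)) := by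
      rw [hσ.range_comp, convexHull_range_eq_image_stdSimplex]
      exact ⟨w, ⟨fun i => (hw₀ i).le, hw₁⟩, rfl⟩
    rw [convexHull_range_eq_image_stdSimplex] at hmem
    obtain ⟨w', hw', hsum⟩ := hmem
    exact ⟨(w', z ∘ Function.invFun e), ⟨hw', fun i _ => hzs (mem_range_self _)⟩, hsum⟩
  · rintro _ ⟨⟨w, z⟩, ⟨hw, hz⟩, rfl⟩
    refine convexHull_mono (range_subset_iff.2 fun i => hz i (mem_univ i)) ?_
    rw [convexHull_range_eq_image_stdSimplex]
    exact ⟨w, hw, rfl⟩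

theorem IsCompact.convexHull [TopologicalSpace E] [ContinuousAdd E] [ContinuousSMul ℝ E]
    [FiniteDimensional ℝ E] {s : Set E} (hs : IsCompact s) : IsCompact (convexHull ℝ s) := by
  rw [convexHull_eq_image_stdSimplex_prod]
  exact ((isCompact_stdSimplex ℝ _).prod (isCompact_univ_pi fun _ => hs)).image (by fun_prop)

end ConvexHull

theorem mem_convexHull_iff_forall_exists_le {E : Type*} [TopologicalSpace E] [AddCommGroup E]
    [Module ℝ E] [IsTopologicalAddGroup E] [ContinuousSMul ℝ E] [LocallyConvexSpace ℝ E]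
    [T2Space E] [FiniteDimensional ℝ E] {s : Set E} (hs : IsCompact s) {x : E} :
    x ∈ convexHull ℝ s ↔ ∀ φ : E →ₗ[ℝ] ℝ, ∃ v ∈ s, φ v ≤ φ x := by
  refine ⟨fun hx φ => ?_, fun h => ?_⟩
  · by_contra! hlt
    exact lt_irrefl (φ x) (convexHull_min hlt (convex_halfSpace_gt φ.isLinear (φ x)) hx)
  · by_contra hx
    obtain ⟨φ, u, hφx, hφs⟩ :=
      geometric_hahn_banach_point_closed (convex_convexHull ℝ s) hs.convexHull.isClosed hx
    obtain ⟨v, hv, hφv⟩ := h φ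
    exact (hφx.trans (hφs v (subset_convexHull ℝ s hv))).not_ge hφv

section Span

variable {X : Type*} [TopologicalSpace X] {ι : Type*} [Fintype ι] {E : Type*}
  [AddCommGroup E] [Module ℝ E] {f : ι → C(X, ℝ)} {b : Basis ι ℝ E} {γ : X → E}

theorem sum_smul_apply_eq_constr (hγ : ∀ x i, b.repr (γ x) i = f i x) (c : ι → ℝ) (x : X) :
    (∑ i, c i • f i) x = (b.constr ℝ c : E →ₗ[ℝ] ℝ) (γ x) := by
  simp [Basis.constr_apply_fintype, hγ, mul_comm]

theorem exists_linearMap_of_mem_span (hγ : ∀ x i, b.repr (γ x) i = f i x) {g : C(X, ℝ)}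
    (hg : g ∈ Submodule.span ℝ (range f)) : ∃ φ : E →ₗ[ℝ] ℝ, ∀ x, g x = φ (γ x) := by
  obtain ⟨c, rfl⟩ := (Submodule.mem_span_range_iff_exists_fun ℝ).1 hg
  exact ⟨b.constr ℝ c, sum_smul_apply_eq_constr hγ c⟩

theorem exists_mem_span_of_linearMap (hγ : ∀ x i, b.repr (γ x) i = f i x) (φ : E →ₗ[ℝ] ℝ) :
    ∃ g ∈ Submodule.span ℝ (range f), ∀ x, g x = φ (γ x) := by
  refine ⟨∑ i, φ (b i) • f i, (Submodule.mem_span_range_iff_exists_fun ℝ).2 ⟨_, rfl⟩, fun x => ?_⟩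
  rw [sum_smul_apply_eq_constr hγ, b.constr_self ℝ]

theorem continuous_of_repr [TopologicalSpace E] [ContinuousAdd E] [ContinuousSMul ℝ E]
    (hγ : ∀ x i, b.repr (γ x) i = f i x) : Continuous γ := by
  have hγ_eq : γ = fun x => ∑ i, f i x • b i := funext fun x => by
    simp_rw [← hγ]; exact (b.sum_repr (γ x)).symm
  rw [hγ_eq]
  fun_prop

end Span

theorem zero_mem_convexHull_iff_sign_change_general
    {X : Type*} [TopologicalSpace X] [CompactSpace X]
    (d : ℕ) (f : Fin d → C(X, ℝ))
    (γ : X → EuclideanSpace ℝ (Fin d))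
    (hγ : ∀ x, ∀ i, γ x i = f i x)
    (A : Set X) (hA : IsClosed A) :
    (0 ∈ convexHull ℝ (γ '' A)) ↔
      ∀ g ∈ Submodule.span ℝ (Set.range f),
        (∃ x ∈ A, 0 ≤ g x) ∧ (∃ y ∈ A, g y ≤ 0) := by
  have hγb : ∀ x i, (PiLp.basisFun 2 ℝ (Fin d)).repr (γ x) i = f i x := hγ
  rw [mem_convexHull_iff_forall_exists_le (hA.isCompact.image (continuous_of_repr hγb))]
  simp only [exists_mem_image, map_zero]
  constructor
  · intro h g hg
    obtain ⟨φ, hφ⟩ := exists_linearMap_of_mem_span hγb hg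
    obtain ⟨x, hx, hφx⟩ := h (-φ)
    simp only [hφ]
    exact ⟨⟨x, hx, by simpa using hφx⟩, h φ⟩
  · intro h φ
    obtain ⟨g, hg, hgφ⟩ := exists_mem_span_of_linearMap hγb φ
    simpa [hgφ] using (h g hg).2

/-- Hahn–Banach lemma: `0` is in the convex hull of `γ(A)` iff every function in the
span of `f₁,…,f_d` changes sign on `A`. -/
theorem zero_mem_convexHull_iff_sign_change
    {X : Type*} [TopologicalSpace X] [CompactSpace X]
    (d : ℕ) (f : Fin d → C(X, ℝ)) (hf : LinearIndependent ℝ f)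
    (γ : X → EuclideanSpace ℝ (Fin d))
    (hγ : ∀ x, ∀ i, γ x i = f i x)
    (A : Set X) (hA : IsClosed A) :
    (0 ∈ convexHull ℝ (γ '' A)) ↔
      ∀ g ∈ Submodule.span ℝ (Set.range f),
        (∃ x ∈ A, 0 ≤ g x) ∧ (∃ y ∈ A, g y ≤ 0) :=
  zero_mem_convexHull_iff_sign_change_general d f γ hγ A hA
end

section
/- Let n ≥ 1 be an integer and p ≥ 2 a prime. In the flat n-torus (ℝ/ℤ)^n with the quotient of the Euclidean ℓ²-metric, consider the grid L = {(k_1/p, ..., k_n/p) : k_i ∈ {0,...,p-1}} of p^n points. Then for every x ∈ L, the set L \ {x} is contained in a closed geodesic ball of radius r = sqrt((n-1)/4 + ((p-2)/(2p))²). -/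
/-!
Centre the ball at the antipode `x + (1/2, …, 1/2)` of `x`. Any two points of the circle `ℝ/ℤ`
are within `1/2` of each other, which accounts for the `(n-1)/4`. A grid point
`y ≠ x` differs from `x` in some coordinate `i`, where `yᵢ - xᵢ` is a nonzero multiple `r/p` of
`1/p` modulo `1`; hence `yᵢ` lies within `|r/p - 1/2| ≤ (p-2)/(2p)` of `xᵢ + 1/2`.
-/

lemma abs_div_sub_half_le {p r : ℝ} (hr : 1 ≤ r) (hrp : r ≤ p - 1) :
    |r / p - 1 / 2| ≤ (p - 2) / (2 * p) := by
  have hp : 0 < p := by linarith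
  rw [show r / p - 1 / 2 = (2 * r - p) / (2 * p) by field_simp, abs_div,
    abs_of_pos (by positivity : 0 < 2 * p), div_le_div_iff_of_pos_right (by positivity), abs_le]
  constructor <;> linarith

namespace UnitAddCircle

lemma dist_le_half (u v : UnitAddCircle) : dist u v ≤ 1 / 2 := by
  simpa [dist_eq_norm] using AddCircle.norm_le_half_period (1 : ℝ) one_ne_zero (x := u - v)

lemma norm_coe_intCast_div_sub_half_le {p : ℕ} {m : ℤ} (hp : 0 < p) (hm : ¬ (p : ℤ) ∣ m) :
    ‖(((m : ℝ) / p - 1 / 2 : ℝ) : UnitAddCircle)‖ ≤ ((p : ℝ) - 2) / (2 * p) := by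
  have hr : 1 ≤ m % p := by
    have := Int.emod_nonneg m (by omega : (p : ℤ) ≠ 0)
    have := mt Int.dvd_of_emod_eq_zero hm
    omega
  have hrp : m % p ≤ p - 1 := by
    have := Int.emod_lt_of_pos m (by omega : (0 : ℤ) < p)
    omega
  have hdecomp : (m : ℝ) / p - 1 / 2 - (m / p : ℤ) = ((m % p : ℤ) : ℝ) / p - 1 / 2 := by
    have hdiv : (m : ℝ) = ((m % p : ℤ) : ℝ) + p * ((m / p : ℤ) : ℝ) := by
      exact_mod_cast (Int.emod_add_mul_ediv m p).symm
    rw [hdiv]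
    field_simp
    ring
  calc ‖(((m : ℝ) / p - 1 / 2 : ℝ) : UnitAddCircle)‖
      = |(m : ℝ) / p - 1 / 2 - round ((m : ℝ) / p - 1 / 2)| := norm_eq
    _ ≤ |(m : ℝ) / p - 1 / 2 - (m / p : ℤ)| := round_le _ _
    _ ≤ ((p : ℝ) - 2) / (2 * p) := by
      rw [hdecomp]
      exact abs_div_sub_half_le (by exact_mod_cast hr) (by exact_mod_cast hrp)

lemma dist_coe_div_coe_div_add_half_le {p : ℕ} {a b : Fin p} (hab : a ≠ b) :
    dist ((((a : ℕ) : ℝ) / p : ℝ) : UnitAddCircle)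
      ((((b : ℕ) : ℝ) / p : ℝ) + ((1 / 2 : ℝ) : UnitAddCircle)) ≤ ((p : ℝ) - 2) / (2 * p) := by
  have hndvd : ¬ (p : ℤ) ∣ ((a : ℕ) - (b : ℕ) : ℤ) := by
    intro h
    have := Int.eq_zero_of_abs_lt_dvd h (abs_sub_lt_iff.2 ⟨by omega, by omega⟩)
    exact hab (Fin.ext (by omega))
  rw [dist_eq_norm, ← AddCircle.coe_add, ← AddCircle.coe_sub,
    show ((a : ℕ) : ℝ) / p - (((b : ℕ) : ℝ) / p + 1 / 2) = (((a : ℕ) - (b : ℕ) : ℤ) : ℝ) / p - 1 / 2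
      by push_cast; ring]
  exact norm_coe_intCast_div_sub_half_le a.pos hndvd

end UnitAddCircle

lemma PiLp.dist_eq_sqrt_sum_dist_sq {ι : Type*} [Fintype ι] {β : ι → Type*}
    [∀ i, PseudoMetricSpace (β i)] (x y : PiLp 2 β) :
    dist x y = √(∑ i, dist (x i) (y i) ^ 2) := by
  rw [PiLp.dist_eq_sum (by norm_num), Real.sqrt_eq_rpow]
  simp

lemma PiLp.dist_le_sqrt_of_forall_dist_le_of_dist_le {ι : Type*} [Fintype ι] {β : ι → Type*}
    [∀ i, PseudoMetricSpace (β i)] {x y : PiLp 2 β} {a b : ℝ} {i₀ : ι}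
    (ha : ∀ i, dist (x i) (y i) ≤ a) (hb : dist (x i₀) (y i₀) ≤ b) :
    dist x y ≤ √((Fintype.card ι - 1) * a ^ 2 + b ^ 2) := by
  classical
  rw [PiLp.dist_eq_sqrt_sum_dist_sq, ← Finset.add_sum_erase _ _ (Finset.mem_univ i₀)]
  have hrest : ∑ i ∈ Finset.univ.erase i₀, dist (x i) (y i) ^ 2 ≤ (Fintype.card ι - 1) * a ^ 2 :=
    calc ∑ i ∈ Finset.univ.erase i₀, dist (x i) (y i) ^ 2
        ≤ ∑ i ∈ Finset.univ.erase i₀, a ^ 2 :=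
          Finset.sum_le_sum fun i _ => pow_le_pow_left₀ dist_nonneg (ha i) 2
      _ = (Fintype.card ι - 1) * a ^ 2 := by
          rw [Finset.sum_const, Finset.card_erase_of_mem (Finset.mem_univ _), Finset.card_univ,
            nsmul_eq_mul, Nat.cast_sub (Fintype.card_pos_iff.2 ⟨i₀⟩), Nat.cast_one]
  exact Real.sqrt_le_sqrt (by linarith [pow_le_pow_left₀ dist_nonneg hb 2])

theorem torus_grid_in_ball_general (n p : ℕ)
    (L : Set (PiLp 2 fun _ : Fin n => AddCircle (1:ℝ)))
    (hL : L = {x | ∃ k : Fin n → Fin p, x = WithLp.toLp 2 (fun i => ((((k i : ℕ) : ℝ) / p : ℝ) : AddCircle (1:ℝ)))}) :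
    ∀ x ∈ L, ∃ c : PiLp 2 fun _ : Fin n => AddCircle (1:ℝ),
      ∀ y ∈ L \ {x}, dist y c ≤ Real.sqrt ((n - 1) / 4 + ((p - 2) / (2 * p))^2) := by
  subst hL
  rintro _ ⟨k, rfl⟩
  refine ⟨WithLp.toLp 2 fun i => ((((k i : ℕ) : ℝ) / p : ℝ) : AddCircle (1:ℝ)) + ((1 / 2 : ℝ) : AddCircle (1:ℝ)), ?_⟩
  rintro _ ⟨⟨k', rfl⟩, hne⟩
  obtain ⟨i₀, hi₀⟩ : ∃ i, k' i ≠ k i := by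
    by_contra! h
    exact hne (by rw [funext h]; rfl)
  refine (PiLp.dist_le_sqrt_of_forall_dist_le_of_dist_le (i₀ := i₀) (b := ((p : ℝ) - 2) / (2 * p))
    (fun _ => UnitAddCircle.dist_le_half _ _) ?_).trans_eq ?_
  · exact UnitAddCircle.dist_coe_div_coe_div_add_half_le hi₀
  · rw [Fintype.card_fin]
    ring_nf

/-- In the flat `n`-torus with the `ℓ²`-metric, for every point `x` of the grid
`L = {(k₁/p, …, kₙ/p)}` of `pⁿ` points, the set `L \ {x}` is contained in a closed
geodesic ball of radius `√((n-1)/4 + ((p-2)/(2p))²)`. -/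
theorem torus_grid_in_ball (n p : ℕ) (hn : 1 ≤ n) (hp : p.Prime)
    (L : Set (PiLp 2 fun _ : Fin n => AddCircle (1:ℝ)))
    (hL : L = {x | ∃ k : Fin n → Fin p, x = WithLp.toLp 2 (fun i => ((((k i : ℕ) : ℝ) / p : ℝ) : AddCircle (1:ℝ)))}) :
    ∀ x ∈ L, ∃ c : PiLp 2 fun _ : Fin n => AddCircle (1:ℝ),
      ∀ y ∈ L \ {x}, dist y c ≤ Real.sqrt ((n - 1) / 4 + ((p - 2) / (2 * p))^2) :=
  torus_grid_in_ball_general n p L hL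
end

section
/- (Babenko) Every trigonometric polynomial of degree at most d, f(t) = Σ_{k=1}^{d} (a_k sin(2πkt) + b_k cos(2πkt)), has a zero on every closed interval I ⊆ ℝ/ℤ of length d/(d+1). -/
/-!
Sample the trigonometric polynomial at the `d + 1` equally spaced points `c + j/(d+1)`,
`0 ≤ j ≤ d`, all of which lie in `[c, c + d/(d+1)]`. For each frequency `1 ≤ k ≤ d` the
values `e^{2πik(c + j/(d+1))}` run over a full geometric progression whose ratio is a
nontrivial `(d+1)`-st root of unity, so they sum to zero; hence the samples of `f` sum to
zero. A continuous function whose values at finitely many points of an interval sum to zero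
takes a value `≤ 0` and a value `≥ 0` there, hence vanishes in between.
-/

open Real Finset

lemma IsPreconnected.exists_zero_of_sum_eq_zero {X ι : Type*} [TopologicalSpace X]
    {S : Set X} (hS : IsPreconnected S) {f : X → ℝ} (hf : ContinuousOn f S)
    {s : Finset ι} (hs : s.Nonempty) {p : ι → X} (hp : ∀ i ∈ s, p i ∈ S)
    (hsum : ∑ i ∈ s, f (p i) = 0) : ∃ x ∈ S, f x = 0 := by
  obtain ⟨i, hi, hfi⟩ := exists_le_of_sum_le hs (f := fun i => f (p i)) (g := 0)
    (by simp [hsum])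
  obtain ⟨j, hj, hfj⟩ := exists_le_of_sum_le hs (f := 0) (g := fun i => f (p i))
    (by simp [hsum])
  exact hS.intermediate_value (hp i hi) (hp j hj) hf ⟨hfi, hfj⟩

lemma sum_exp_equally_spaced_eq_zero {n k : ℕ} (hk : ¬ n ∣ k) (x : ℝ) :
    ∑ j ∈ range n, Complex.exp (↑(2 * π * k * (x + j / n)) * Complex.I) = 0 := by
  rcases Nat.eq_zero_or_pos n with rfl | hn
  · simp
  have hn' : (n : ℂ) ≠ 0 := by exact_mod_cast hn.ne'
  have hζ := Complex.isPrimitiveRoot_exp n hn.ne'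
  set ζ := Complex.exp (2 * π * Complex.I / n)
  have hterm : ∀ j ∈ range n, Complex.exp (↑(2 * π * k * (x + j / n)) * Complex.I)
      = Complex.exp (↑(2 * π * k * x) * Complex.I) * (ζ ^ k) ^ j := by
    intro j _
    rw [← pow_mul, ← Complex.exp_nat_mul, ← Complex.exp_add]
    congr 1
    push_cast
    field_simp
  have hratio : ζ ^ k ≠ 1 := by rwa [Ne, hζ.pow_eq_one_iff_dvd]
  rw [sum_congr rfl hterm, ← mul_sum, geom_sum_eq hratio, ← pow_mul, mul_comm k,
    pow_mul, hζ.pow_eq_one]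
  simp

lemma sum_trigPoly_equally_spaced_eq_zero {n : ℕ} {s : Finset ℕ} (hs : ∀ k ∈ s, ¬ n ∣ k)
    (a b : ℕ → ℝ) (x : ℝ) :
    ∑ j ∈ range n, ∑ k ∈ s,
      (a k * sin (2 * π * k * (x + j / n)) + b k * cos (2 * π * k * (x + j / n))) = 0 := by
  rw [sum_comm]
  refine sum_eq_zero fun k hk => ?_
  have hexp := sum_exp_equally_spaced_eq_zero (hs k hk) x
  have hsin := congrArg Complex.im hexp
  have hcos := congrArg Complex.re hexp
  simp only [Complex.im_sum, Complex.re_sum, Complex.exp_ofReal_mul_I_im,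
    Complex.exp_ofReal_mul_I_re, Complex.zero_im, Complex.zero_re] at hsin hcos
  rw [sum_add_distrib, ← mul_sum, ← mul_sum, hsin, hcos]
  ring

/-- Babenko's theorem: every trigonometric polynomial of degree at most `d` has a
zero on every closed interval of length `d/(d+1)` (stated for the periodic function
on `ℝ`, i.e. for every closed interval `[c, c + d/(d+1)]`). -/
theorem babenko (d : ℕ) (a b : ℕ → ℝ) (f : ℝ → ℝ)
    (hf : ∀ t, f t = ∑ k ∈ Finset.Icc 1 d,
      (a k * Real.sin (2 * π * k * t) + b k * Real.cos (2 * π * k * t)))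
    (c : ℝ) :
    ∃ t ∈ Set.Icc c (c + (d:ℝ)/(d+1)), f t = 0 := by
  have hcont : Continuous f := by
    rw [funext hf]
    fun_prop
  have hsample : ∀ j ∈ range (d + 1),
      c + (j : ℝ) / (d + 1 : ℕ) ∈ Set.Icc c (c + (d : ℝ) / (d + 1)) := by
    intro j hj
    have hjd : (j : ℝ) ≤ d := by exact_mod_cast Nat.lt_succ_iff.mp (mem_range.mp hj)
    push_cast
    constructor
    · have : (0 : ℝ) ≤ j / (d + 1) := by positivity
      linarith
    · gcongr
  have hsum : ∑ j ∈ range (d + 1), f (c + (j : ℝ) / (d + 1 : ℕ)) = 0 := by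
    simp only [hf]
    refine sum_trigPoly_equally_spaced_eq_zero (fun k hk => ?_) a b c
    obtain ⟨hk1, hkd⟩ := mem_Icc.mp hk
    exact Nat.not_dvd_of_pos_of_lt hk1 (Nat.lt_succ_of_le hkd)
  exact isPreconnected_Icc.exists_zero_of_sum_eq_zero hcont.continuousOn
    nonempty_range_add_one hsample hsum
end

section
/- Let n ≥ 1 be an integer and p ≥ 3 a prime. Let S ⊆ (ℤ_{≥0})^n \ {0} with |S| ≤ p^n/2 − 1, such that every α ∈ S has some coordinate not divisible by p. Then every multivariate trigonometric polynomial with spectrum S has a zero on every closed geodesic ball of radius r = sqrt((n−1)/4 + ((p−2)/(2p))²) in the flat torus (ℝ/ℤ)^n. -/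
/-!
Instead of the equivariant topology of the paper, an averaging argument suffices. If
`∑ₖ wₖ f(yₖ) = 0` with weights `wₖ ≥ 0`, not all zero, and all points of positive weight in a
Euclidean ball of `ℝⁿ`, then `f` takes values of both signs in the ball and so vanishes there
by the intermediate value theorem; projecting to the torus does not increase distances. Writing
`f = Re ∑_α z_α e(α·t)` with `e(x) = exp(2πix)`, it suffices that `∑ₖ wₖ e(α·yₖ) = 0` for
every `α ∈ S`.

For `n ≥ 2` take the `pⁿ` points `c + (k - (p-1)/2)/p`, `k ∈ {0,…,p-1}ⁿ`, with equal weights: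
the sum factors into one-dimensional geometric sums of `p`-th roots of unity, one of which
vanishes because `p ∤ α_j`, and `n ((p-1)/2p)² ≤ (n-1)/4 + ((p-2)/2p)²` once `n ≥ 2`.
For `n = 1` that grid is too wide; take `c - 1/2 + k/p` with weights `1 - cos(2πρk/p)`, which
kill the outlying point `k = 0`. Expanding the cosine leaves geometric sums of frequencies
`λ` and `λ ± ρ` (`λ ∈ S`), and `|S| ≤ p/2 - 1` leaves a residue `ρ ≢ 0, ±λ mod p`.
-/

open Real

open Finset WithLp

theorem Finset.exists_pos_and_nonpos_of_sum_mul_eq_zero {ι : Type*} {s : Finset ι} {w g : ι → ℝ}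
    (hw : ∀ i ∈ s, 0 ≤ w i) (hpos : ∃ i ∈ s, 0 < w i) (hsum : ∑ i ∈ s, w i * g i = 0) :
    ∃ i ∈ s, 0 < w i ∧ g i ≤ 0 := by
  by_contra! hg
  obtain ⟨i, hi, hwi⟩ := hpos
  have : 0 < ∑ i ∈ s, w i * g i := by
    refine sum_pos' (fun j hj => ?_) ⟨i, hi, mul_pos hwi (hg i hi hwi)⟩
    rcases (hw j hj).eq_or_lt with h0 | hwj
    · simp [← h0]
    · exact (mul_pos hwj (hg j hj hwj)).le
  linarith

theorem IsPreconnected.exists_eq_zero_of_sum_mul_eq_zero {X ι : Type*} [TopologicalSpace X]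
    {K : Set X} (hK : IsPreconnected K) {f : X → ℝ} (hf : ContinuousOn f K) {s : Finset ι}
    {w : ι → ℝ} {y : ι → X} (hw : ∀ i ∈ s, 0 ≤ w i) (hpos : ∃ i ∈ s, 0 < w i)
    (hy : ∀ i ∈ s, 0 < w i → y i ∈ K) (hsum : ∑ i ∈ s, w i * f (y i) = 0) :
    ∃ x ∈ K, f x = 0 := by
  obtain ⟨i, hi, hwi, hfi⟩ := exists_pos_and_nonpos_of_sum_mul_eq_zero hw hpos hsum
  obtain ⟨j, hj, hwj, hfj⟩ :=
    exists_pos_and_nonpos_of_sum_mul_eq_zero (g := fun i => -f (y i)) hw hpos (by simp [hsum])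
  exact hK.intermediate_value (hy i hi hwi) (hy j hj hwj) hf ⟨hfi, by linarith⟩

theorem dist_toLp_le_sqrt {ι : Type*} [Fintype ι] {t c : ι → ℝ} {X : ℝ}
    (h : ∑ i, (t i - c i) ^ 2 ≤ X) : dist (toLp 2 t) (toLp 2 c) ≤ √X := by
  rw [EuclideanSpace.dist_eq]
  gcongr
  simpa [Real.dist_eq, sq_abs] using h

theorem dist_le_dist_toLp {ι : Type*} [Fintype ι]
    (q : (ι → ℝ) → PiLp 2 fun _ : ι => AddCircle (1 : ℝ))
    (hq : ∀ t i, q t i = (t i : AddCircle (1 : ℝ))) (t c : ι → ℝ) :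
    dist (q t) (q c) ≤ dist (toLp 2 t) (toLp 2 c) := by
  rw [PiLp.dist_eq_of_L2, PiLp.dist_eq_of_L2]
  gcongr with i
  simp only [hq, dist_eq_norm, ← AddCircle.coe_sub]
  exact QuotientAddGroup.norm_mk_le_norm

theorem exists_int_forall_not_dvd {p : ℕ} (L : Finset ℤ) (hL : 2 * L.card + 1 < p) :
    ∃ r : ℤ, ¬ (p : ℤ) ∣ r ∧ ∀ m ∈ L, ¬ (p : ℤ) ∣ m + r ∧ ¬ (p : ℤ) ∣ m - r := by
  have : NeZero p := ⟨by omega⟩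
  let B : Finset (ZMod p) :=
    insert 0 (L.image (fun m : ℤ => -(m : ZMod p)) ∪ L.image (fun m : ℤ => (m : ZMod p)))
  have hB : B.card < (univ : Finset (ZMod p)).card := by
    rw [card_univ, ZMod.card]
    calc B.card ≤ (L.image _ ∪ L.image _).card + 1 := card_insert_le _ _
      _ ≤ L.card + L.card + 1 := by
        gcongr; exact (card_union_le _ _).trans (add_le_add card_image_le card_image_le)
      _ < p := by omega
  obtain ⟨r, -, hr⟩ := exists_mem_notMem_of_card_lt_card hB
  simp only [B, mem_insert, mem_union, mem_image, not_or, not_exists, not_and] at hr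
  refine ⟨r.val, fun hdvd => hr.1 ?_, fun m hm => ⟨fun hdvd => hr.2.1 m hm ?_,
    fun hdvd => hr.2.2 m hm ?_⟩⟩ <;>
    rw [← ZMod.intCast_zmod_eq_zero_iff_dvd] at hdvd <;>
    push_cast [ZMod.natCast_zmod_val] at hdvd
  · exact hdvd
  · linear_combination -hdvd
  · linear_combination hdvd

theorem one_sub_cos_two_pi_div_pos {p : ℕ} (hp : p ≠ 0) {r : ℤ} (hr : ¬ (p : ℤ) ∣ r) :
    0 < 1 - cos (2 * π * (r / p)) := by
  refine sub_pos.2 ((cos_le_one _).lt_of_ne fun h => hr ?_)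
  obtain ⟨m, hm⟩ := (cos_eq_one_iff _).1 h
  refine ⟨m, ?_⟩
  field_simp at hm
  rw [mul_comm]
  exact_mod_cast hm.symm

namespace TorusTrigZero

noncomputable def e (x : ℝ) : ℂ := Complex.exp (2 * π * x * Complex.I)

lemma e_add (x y : ℝ) : e (x + y) = e x * e y := by
  simp only [e, ← Complex.exp_add]; push_cast; ring_nf

lemma e_sum {ι : Type*} (s : Finset ι) (g : ι → ℝ) : e (∑ i ∈ s, g i) = ∏ i ∈ s, e (g i) := by
  simp only [e, ← Complex.exp_sum]; push_cast; rw [Finset.mul_sum, Finset.sum_mul]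

lemma e_nat_mul (k : ℕ) (x : ℝ) : e (k * x) = e x ^ k := by
  simp only [e, ← Complex.exp_nat_mul]; push_cast; ring_nf

lemma e_eq_one_iff (x : ℝ) : e x = 1 ↔ ∃ m : ℤ, (m : ℝ) = x := by
  have h : (2 * π * Complex.I : ℂ) ≠ 0 := by simp [pi_ne_zero]
  rw [e, Complex.exp_eq_one_iff]
  simp_rw [show (2 * π * x * Complex.I : ℂ) = x * (2 * π * Complex.I) by ring, mul_left_inj' h]
  constructor <;> rintro ⟨m, hm⟩ <;> exact ⟨m, by exact_mod_cast hm.symm⟩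

lemma ofReal_cos_two_pi_mul (x : ℝ) : (cos (2 * π * x) : ℂ) = (e x + e (-x)) / 2 := by
  rw [Complex.ofReal_cos, eq_div_iff two_ne_zero, mul_comm, Complex.two_cos, e, e]
  push_cast; ring_nf

lemma re_mul_e (a b x : ℝ) :
    (((a : ℂ) - b * Complex.I) * e x).re = a * cos (2 * π * x) + b * sin (2 * π * x) := by
  rw [e, show (2 * π * x * Complex.I : ℂ) = (2 * π * x : ℝ) * Complex.I by push_cast; ring,
    Complex.exp_mul_I, ← Complex.ofReal_cos, ← Complex.ofReal_sin]
  simp only [Complex.mul_re, Complex.add_re, Complex.add_im, Complex.sub_re, Complex.sub_im,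
    Complex.ofReal_re, Complex.ofReal_im, Complex.mul_im, Complex.I_re, Complex.I_im]
  ring

theorem sum_range_e_int_mul_eq_zero {p : ℕ} {m : ℤ} (hm : ¬ (p : ℤ) ∣ m) (s : ℝ) :
    ∑ k ∈ range p, e (m * (s + k / p)) = 0 := by
  obtain rfl | hp := p.eq_zero_or_pos
  · simp
  have hp' : (p : ℝ) ≠ 0 := by positivity
  have hω : e (m / p) ≠ 1 := by
    rw [Ne, e_eq_one_iff]
    rintro ⟨j, hj⟩
    rw [eq_div_iff hp'] at hj
    exact hm ⟨j, by exact_mod_cast (hj.symm.trans (mul_comm _ _))⟩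
  have hωp : e (m / p) ^ p = 1 := by
    rw [← e_nat_mul, e_eq_one_iff]
    exact ⟨m, by field_simp⟩
  have hterm : ∀ k : ℕ, e (m * (s + k / p)) = e (m * s) * e (m / p) ^ k := fun k => by
    rw [← e_nat_mul, ← e_add]; ring_nf
  simp_rw [hterm, ← mul_sum, geom_sum_eq hω, hωp, sub_self, zero_div, mul_zero]

theorem sum_pi_e_eq_zero {ι : Type*} [Fintype ι] [DecidableEq ι] {p : ℕ} (α : ι → ℕ) {j : ι}
    (hj : ¬ p ∣ α j) (s : ι → ℝ) :
    ∑ k : ι → Fin p, e (∑ i, α i * (s i + k i / p)) = 0 := by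
  simp_rw [e_sum]
  rw [← Fintype.prod_sum fun i (x : Fin p) => e (α i * (s i + x / p))]
  refine prod_eq_zero (mem_univ j) ?_
  rw [Fin.sum_univ_eq_sum_range (fun k => e (α j * (s j + k / p)))]
  exact_mod_cast sum_range_e_int_mul_eq_zero (m := α j) (by exact_mod_cast hj) (s j)

theorem sum_range_one_sub_cos_mul_e_eq_zero {p : ℕ} {m r : ℤ} (hm : ¬ (p : ℤ) ∣ m)
    (hadd : ¬ (p : ℤ) ∣ m + r) (hsub : ¬ (p : ℤ) ∣ m - r) (s : ℝ) :
    ∑ k ∈ range p, ((1 - cos (2 * π * (r * k / p)) : ℝ) : ℂ) * e (m * (s + k / p)) = 0 := by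
  have hterm : ∀ k : ℕ, ((1 - cos (2 * π * (r * k / p)) : ℝ) : ℂ) * e (m * (s + k / p)) =
      e (m * (s + k / p)) - e (-(r * s)) / 2 * e ((m + r : ℤ) * (s + k / p))
        - e (r * s) / 2 * e ((m - r : ℤ) * (s + k / p)) := by
    intro k
    have hplus : e (r * k / p) * e (m * (s + k / p)) =
        e (-(r * s)) * e ((m + r : ℤ) * (s + k / p)) := by
      simp only [← e_add]; push_cast; ring_nf
    have hminus : e (-(r * k / p)) * e (m * (s + k / p)) =
        e (r * s) * e ((m - r : ℤ) * (s + k / p)) := by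
      simp only [← e_add]; push_cast; ring_nf
    rw [Complex.ofReal_sub, ofReal_cos_two_pi_mul, Complex.ofReal_one]
    linear_combination (-1 / 2 : ℂ) * hplus + (-1 / 2 : ℂ) * hminus
  simp_rw [hterm, sum_sub_distrib, ← mul_sum, sum_range_e_int_mul_eq_zero hm,
    sum_range_e_int_mul_eq_zero hadd, sum_range_e_int_mul_eq_zero hsub, mul_zero, sub_zero]

section TrigPoly

variable {ι : Type*} [Fintype ι] (S : Finset (ι → ℕ)) (a b : (ι → ℕ) → ℝ)

noncomputable def trigPoly (t : ι → ℝ) : ℝ :=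
  ∑ α ∈ S, (a α * cos (2 * π * ∑ i, (α i : ℝ) * t i) + b α * sin (2 * π * ∑ i, (α i : ℝ) * t i))

lemma continuous_trigPoly : Continuous (trigPoly S a b) := by
  unfold trigPoly; fun_prop

lemma trigPoly_eq_re (t : ι → ℝ) :
    trigPoly S a b t = (∑ α ∈ S, ((a α : ℂ) - b α * Complex.I) * e (∑ i, α i * t i)).re := by
  simp only [trigPoly, Complex.re_sum, re_mul_e]

theorem sum_mul_trigPoly_eq_zero {κ : Type*} (s : Finset κ) (w : κ → ℝ) (y : κ → ι → ℝ)
    (h : ∀ α ∈ S, ∑ k ∈ s, (w k : ℂ) * e (∑ i, α i * y k i) = 0) :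
    ∑ k ∈ s, w k * trigPoly S a b (y k) = 0 := by
  simp_rw [trigPoly_eq_re, ← Complex.re_ofReal_mul, ← Complex.re_sum, mul_sum]
  rw [sum_comm, sum_eq_zero fun α hα => ?_, Complex.zero_re]
  simp_rw [mul_left_comm (w _ : ℂ), ← mul_sum, h α hα, mul_zero]

end TrigPoly

theorem exists_trigPoly_eq_zero_of_sum_mul_e_eq_zero {ι κ : Type*} [Fintype ι]
    {S : Finset (ι → ℕ)} (a b : (ι → ℕ) → ℝ) {s : Finset κ} {w : κ → ℝ} {y : κ → ι → ℝ}
    (c : ι → ℝ) {R : ℝ} (hw : ∀ k ∈ s, 0 ≤ w k) (hpos : ∃ k ∈ s, 0 < w k)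
    (hy : ∀ k ∈ s, 0 < w k → dist (toLp 2 (y k)) (toLp 2 c) ≤ R)
    (h : ∀ α ∈ S, ∑ k ∈ s, (w k : ℂ) * e (∑ i, α i * y k i) = 0) :
    ∃ t, dist (toLp 2 t) (toLp 2 c) ≤ R ∧ trigPoly S a b t = 0 := by
  have hK : IsPreconnected (ofLp '' Metric.closedBall (toLp 2 c) R) :=
    (convex_closedBall _ _).isPreconnected.image _ (PiLp.continuous_ofLp 2 _).continuousOn
  obtain ⟨_, ⟨x, hx, rfl⟩, hx0⟩ := hK.exists_eq_zero_of_sum_mul_eq_zero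
    (continuous_trigPoly S a b).continuousOn hw hpos
    (fun k hk hwk => ⟨toLp 2 (y k), hy k hk hwk, rfl⟩) (sum_mul_trigPoly_eq_zero S a b s w y h)
  exact ⟨ofLp x, by simpa using hx, hx0⟩

theorem exists_trigPoly_eq_zero_of_two_le {n p : ℕ} (hn : 2 ≤ n) (hp : 0 < p)
    {S : Finset (Fin n → ℕ)} (hSp : ∀ α ∈ S, ∃ i, ¬ p ∣ α i) (a b : (Fin n → ℕ) → ℝ)
    (c : Fin n → ℝ) :
    ∃ t, dist (toLp 2 t) (toLp 2 c) ≤ √((n - 1) / 4 + ((p - 2) / (2 * p)) ^ 2) ∧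
      trigPoly S a b t = 0 := by
  have hn' : (2 : ℝ) ≤ n := by exact_mod_cast hn
  have hp' : (1 : ℝ) ≤ p := by exact_mod_cast hp
  set σ : ℝ := (p - 1) / (2 * p)
  refine exists_trigPoly_eq_zero_of_sum_mul_e_eq_zero a b c (s := univ) (w := 1)
    (y := fun (k : Fin n → Fin p) i => c i - σ + k i / p) (fun _ _ => zero_le_one)
    ⟨fun _ => ⟨0, hp⟩, mem_univ _, one_pos⟩ (fun k _ _ => dist_toLp_le_sqrt ?_) fun α hα => ?_
  · have hoffset : ∀ x : Fin p, ((x : ℝ) / p - σ) ^ 2 ≤ σ ^ 2 := fun x => by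
      have hx : ((x : ℕ) : ℝ) + 1 ≤ p := by exact_mod_cast x.isLt
      rw [show (x : ℝ) / p - σ = (2 * x - (p - 1)) / (2 * p) by simp only [σ]; field_simp, div_pow,
        div_pow]
      exact div_le_div_of_nonneg_right (sq_le_sq' (by linarith [(x : ℕ).cast_nonneg (α := ℝ)])
        (by linarith)) (by positivity)
    calc ∑ i, (c i - σ + (k i : ℝ) / p - c i) ^ 2 = ∑ i, ((k i : ℝ) / p - σ) ^ 2 := by
          congr! 2 with i; ring
      _ ≤ ∑ _i : Fin n, σ ^ 2 := sum_le_sum fun i _ => hoffset (k i)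
      _ = n * σ ^ 2 := by simp
      _ ≤ (n - 1) / 4 + ((p - 2) / (2 * p)) ^ 2 := by
        rw [← sub_nonneg, show (n - 1) / 4 + ((p - 2) / (2 * p)) ^ 2 - n * σ ^ 2 =
          ((n - 2) * (2 * p - 1) + 2) / (2 * p) ^ 2 by simp only [σ]; field_simp; ring]
        exact div_nonneg (by nlinarith) (by positivity)
  · obtain ⟨j, hj⟩ := hSp α hα
    simpa using sum_pi_e_eq_zero α hj (fun i => c i - σ)

theorem exists_trigPoly_eq_zero_of_dim_one {p : ℕ} {S : Finset (Fin 1 → ℕ)}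
    (hS : 2 * S.card + 1 < p) (hSp : ∀ α ∈ S, ¬ p ∣ α 0) (a b : (Fin 1 → ℕ) → ℝ)
    (c : Fin 1 → ℝ) :
    ∃ t, dist (toLp 2 t) (toLp 2 c) ≤ (p - 2) / (2 * p) ∧ trigPoly S a b t = 0 := by
  obtain ⟨r, hr, hrS⟩ := exists_int_forall_not_dvd (p := p) (S.image fun α => (α 0 : ℤ))
    (by have := S.card_image_le (f := fun α => (α 0 : ℤ)); omega)
  have hp : (2 : ℝ) ≤ p := by exact_mod_cast (by omega : 2 ≤ p)
  refine exists_trigPoly_eq_zero_of_sum_mul_e_eq_zero a b c (s := range p)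
    (w := fun k => 1 - cos (2 * π * (r * k / p))) (y := fun k _ => c 0 - 1 / 2 + k / p)
    (fun k _ => sub_nonneg.2 (cos_le_one _))
    ⟨1, mem_range.2 (by omega), by simpa using one_sub_cos_two_pi_div_pos (by omega) hr⟩
    (fun k hk hwk => ?_) fun α hα => ?_
  · have hk0 : k ≠ 0 := by rintro rfl; simp at hwk
    have hk1 : (1 : ℝ) ≤ k := by exact_mod_cast Nat.one_le_iff_ne_zero.2 hk0
    have hkp : (k : ℝ) + 1 ≤ p := by exact_mod_cast mem_range.1 hk
    rw [← sqrt_sq (div_nonneg (by linarith) (by positivity) : (0 : ℝ) ≤ (p - 2) / (2 * p))]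
    refine dist_toLp_le_sqrt ?_
    rw [Fin.sum_univ_one, show c 0 - 1 / 2 + k / p - c 0 = (2 * k - p) / (2 * p) by
      field_simp; ring, div_pow, div_pow]
    exact div_le_div_of_nonneg_right (sq_le_sq' (by linarith) (by linarith)) (by positivity)
  · obtain ⟨hadd, hsub⟩ := hrS (α 0) (mem_image_of_mem _ hα)
    simpa using sum_range_one_sub_cos_mul_e_eq_zero (by exact_mod_cast hSp α hα) hadd hsub
      (c 0 - 1 / 2)

end TorusTrigZero

open TorusTrigZero

theorem multivariate_trig_zero_general (n p : ℕ) (hn : 1 ≤ n) (hp3 : 3 ≤ p)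
    (S : Finset (Fin n → ℕ))
    (hScard : (S.card : ℝ) ≤ (p : ℝ)^n / 2 - 1)
    (hSp : ∀ α ∈ S, ∃ i, ¬ p ∣ α i)
    (a b : (Fin n → ℕ) → ℝ)
    (f : (Fin n → ℝ) → ℝ)
    (hf : ∀ t, f t = ∑ α ∈ S,
      (a α * Real.cos (2 * π * ∑ i, (α i : ℝ) * t i) +
       b α * Real.sin (2 * π * ∑ i, (α i : ℝ) * t i)))
    (q : (Fin n → ℝ) → PiLp 2 fun _ : Fin n => AddCircle (1:ℝ))
    (hq : ∀ t i, q t i = ((t i : ℝ) : AddCircle (1:ℝ)))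
    (center : PiLp 2 fun _ : Fin n => AddCircle (1:ℝ)) :
    ∃ t : Fin n → ℝ,
      dist (q t) center ≤ Real.sqrt (((n:ℝ) - 1) / 4 + (((p:ℝ) - 2) / (2 * p))^2) ∧
      f t = 0 := by
  choose c hc using fun i => QuotientAddGroup.mk_surjective (center i)
  obtain rfl : q c = center := PiLp.ext fun i => (hq c i).trans (hc i)
  obtain rfl : f = trigPoly S a b := funext hf
  suffices ∃ t, dist (toLp 2 t) (toLp 2 c) ≤ √((n - 1) / 4 + ((p - 2) / (2 * p)) ^ 2) ∧
      trigPoly S a b t = 0 by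
    obtain ⟨t, ht, ht0⟩ := this
    exact ⟨t, (dist_le_dist_toLp q hq t c).trans ht, ht0⟩
  obtain rfl | hn2 := hn.eq_or_lt
  · have hS : 2 * S.card + 1 < p := by
      have : (2 * S.card + 2 : ℝ) ≤ p := by linarith [pow_one (p : ℝ)]
      exact_mod_cast this
    have hp : (3 : ℝ) ≤ p := by exact_mod_cast hp3
    rw [Nat.cast_one, sub_self, zero_div, zero_add,
      sqrt_sq (div_nonneg (by linarith) (by positivity))]
    exact exists_trigPoly_eq_zero_of_dim_one hS
      (fun α hα => by simpa [Fin.forall_fin_one] using hSp α hα) a b c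
  · exact exists_trigPoly_eq_zero_of_two_le hn2 (by omega) hSp a b c

/-- Every multivariate trigonometric polynomial with spectrum `S` (with `|S| ≤ pⁿ/2 - 1`
and every `α ∈ S` having a coordinate not divisible by `p`) has a zero on every closed
geodesic ball of radius `√((n-1)/4 + ((p-2)/(2p))²)` in the flat torus `(ℝ/ℤ)ⁿ`. -/
theorem multivariate_trig_zero (n p : ℕ) (hn : 1 ≤ n) (hp : p.Prime) (hp3 : 3 ≤ p)
    (S : Finset (Fin n → ℕ)) (hS0 : (0 : Fin n → ℕ) ∉ S)
    (hScard : (S.card : ℝ) ≤ (p : ℝ)^n / 2 - 1)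
    (hSp : ∀ α ∈ S, ∃ i, ¬ p ∣ α i)
    (a b : (Fin n → ℕ) → ℝ) (hab : ∀ α ∈ S, (a α, b α) ≠ (0, 0))
    (f : (Fin n → ℝ) → ℝ)
    (hf : ∀ t, f t = ∑ α ∈ S,
      (a α * Real.cos (2 * π * ∑ i, (α i : ℝ) * t i) +
       b α * Real.sin (2 * π * ∑ i, (α i : ℝ) * t i)))
    (q : (Fin n → ℝ) → PiLp 2 fun _ : Fin n => AddCircle (1:ℝ))
    (hq : ∀ t i, q t i = ((t i : ℝ) : AddCircle (1:ℝ)))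
    (center : PiLp 2 fun _ : Fin n => AddCircle (1:ℝ)) :
    ∃ t : Fin n → ℝ,
      dist (q t) center ≤ Real.sqrt (((n:ℝ) - 1) / 4 + (((p:ℝ) - 2) / (2 * p))^2) ∧
      f t = 0 :=
  multivariate_trig_zero_general n p hn hp3 S hScard hSp a b f hf q hq center
end
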